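/- Under the hypotheses of the paper's main theorem (Deg(x) ≤ C·d(x,p)^{A₃}, |u(x,t)| ≤ A₁·exp(A₂·d(x,p)·ln d(x,p)), A₂ + A₃ ≤ 1, u an ancient solution on V×[−T,0]), the Taylor coefficients a_k(x) := ∂_t^k u(x,0) satisfy |a_k(x)| ≤ A₁·(2C)^k·exp((A₂+A₃)·(k + d(x,p))·ln(k + d(x,p))) for all k ≥ 0 and x ∈ V. -/

import Mathlib

open Real Filter

/-- A weighted graph: symmetric nonnegative edge weights, positive vertex
weights, locally finite. -/
structure WeightedGraph (V : Type*) where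
  ω : V → V → ℝ
  μ : V → ℝ
  symm : ∀ x y, ω x y = ω y x
  nonneg : ∀ x y, 0 ≤ ω x y
  loopless : ∀ x, ω x x = 0
  μ_pos : ∀ x, 0 < μ x
  locFin : ∀ x, (Function.support (ω x)).Finite

namespace WeightedGraph

variable {V : Type*}

/-- The graph Laplacian Δf(x) = Σ_y (ω_{xy}/μ_x)(f(y) - f(x)). -/
noncomputable def lap (G : WeightedGraph V) (f : V → ℝ) (x : V) : ℝ :=
  ∑' y, (G.ω x y / G.μ x) * (f y - f x)

/-- The weighted degree Deg(x) = Σ_y ω_{xy}/μ_x. -/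
noncomputable def deg (G : WeightedGraph V) (x : V) : ℝ :=
  ∑' y, G.ω x y / G.μ x

/-- The underlying simple graph: x ~ y iff ω_{xy} ≠ 0. -/
def adj (G : WeightedGraph V) : SimpleGraph V :=
  SimpleGraph.fromRel (fun x y => G.ω x y ≠ 0)

/-- The combinatorial graph distance. -/
noncomputable def dist (G : WeightedGraph V) (x y : V) : ℕ := G.adj.dist x y

/-- Iterated Laplacian Δ^k. -/
noncomputable def lapIter (G : WeightedGraph V) : ℕ → (V → ℝ) → (V → ℝ)
  | 0, f => f
  | (k+1), f => G.lap (G.lapIter k f)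

end WeightedGraph

namespace WeightedGraph

variable {V : Type*}

lemma lap_eq_sum (G : WeightedGraph V) (f : V → ℝ) (x : V) :
    G.lap f x = ∑ y ∈ (G.locFin x).toFinset, (G.ω x y / G.μ x) * (f y - f x) := by
  refine tsum_eq_sum ?_
  intro y hy
  rw [Set.Finite.mem_toFinset, Function.mem_support, not_not] at hy
  simp [hy]

lemma deg_eq_sum (G : WeightedGraph V) (x : V) :
    G.deg x = ∑ y ∈ (G.locFin x).toFinset, G.ω x y / G.μ x := by
  refine tsum_eq_sum ?_
  intro y hy
  rw [Set.Finite.mem_toFinset, Function.mem_support, not_not] at hy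
  simp [hy]

lemma deg_nonneg (G : WeightedGraph V) (x : V) : 0 ≤ G.deg x := by
  rw [G.deg_eq_sum]
  exact Finset.sum_nonneg fun y _ => div_nonneg (G.nonneg x y) (G.μ_pos x).le

lemma abs_lap_le (G : WeightedGraph V) (f : V → ℝ) (x : V) (M : ℝ)
    (h : ∀ y, (G.ω x y ≠ 0 ∨ y = x) → |f y| ≤ M) :
    |G.lap f x| ≤ 2 * G.deg x * M := by
  have hx : |f x| ≤ M := h x (Or.inr rfl)
  rw [G.lap_eq_sum, G.deg_eq_sum]
  calc |∑ y ∈ (G.locFin x).toFinset, (G.ω x y / G.μ x) * (f y - f x)|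
      ≤ ∑ y ∈ (G.locFin x).toFinset, |(G.ω x y / G.μ x) * (f y - f x)| :=
        Finset.abs_sum_le_sum_abs _ _
    _ ≤ ∑ y ∈ (G.locFin x).toFinset, (G.ω x y / G.μ x) * (2 * M) := by
        refine Finset.sum_le_sum fun y hy => ?_
        rw [Set.Finite.mem_toFinset, Function.mem_support] at hy
        have hc : 0 ≤ G.ω x y / G.μ x := div_nonneg (G.nonneg x y) (G.μ_pos x).le
        rw [abs_mul, abs_of_nonneg hc]
        refine mul_le_mul_of_nonneg_left ?_ hc
        calc |f y - f x| ≤ |f y| + |f x| := abs_sub _ _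
          _ ≤ M + M := add_le_add (h y (Or.inl hy)) hx
          _ = 2 * M := by ring
    _ = 2 * (∑ y ∈ (G.locFin x).toFinset, G.ω x y / G.μ x) * M := by
        rw [← Finset.sum_mul]; ring

lemma dist_le_of_ne_zero (G : WeightedGraph V) (hconn : G.adj.Connected) (p x y : V)
    (h : G.ω x y ≠ 0) : G.dist y p ≤ G.dist x p + 1 := by
  rcases eq_or_ne y x with rfl | hne
  · omega
  · have hadj : G.adj.Adj y x := by
      rw [WeightedGraph.adj, SimpleGraph.fromRel_adj]
      exact ⟨hne, Or.inr h⟩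
    have h1 : G.adj.dist y x = 1 := SimpleGraph.dist_eq_one_iff_adj.2 hadj
    have h2 := hconn.dist_triangle (u := y) (v := x) (w := p)
    unfold WeightedGraph.dist
    omega

end WeightedGraph

lemma mullog_nonneg (n : ℕ) : 0 ≤ (n : ℝ) * Real.log n := by
  rcases Nat.eq_zero_or_pos n with rfl | hn
  · simp
  · have h1 : (1:ℝ) ≤ n := by exact_mod_cast hn
    exact mul_nonneg (by positivity) (Real.log_nonneg h1)

lemma mullog_mono {a b : ℕ} (h : a ≤ b) : (a:ℝ) * Real.log a ≤ (b:ℝ) * Real.log b := by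
  rcases Nat.eq_zero_or_pos a with rfl | ha
  · simpa using mullog_nonneg b
  · have h1 : (1:ℝ) ≤ a := by exact_mod_cast ha
    have hab : (a:ℝ) ≤ b := by exact_mod_cast h
    have hlog : Real.log a ≤ Real.log b := Real.log_le_log (by linarith) hab
    exact mul_le_mul hab hlog (Real.log_nonneg h1) (by linarith)

/-- bound on the Taylor coefficients a_k(x) = ∂_t^k u(x,0). -/
theorem taylor_coefficient_bound {V : Type*} (G : WeightedGraph V)
    (hconn : G.adj.Connected) (p : V) (T : ℝ) (hT : 0 < T)
    (C A₁ A₂ A₃ : ℝ) (hC : 0 < C) (hA₁ : 0 < A₁) (hA₂ : 0 < A₂) (hA₃ : 0 ≤ A₃)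
    (hsum : A₂ + A₃ ≤ 1)
    (hdeg : ∀ x : V, G.deg x ≤ C * (G.dist x p : ℝ) ^ A₃)
    (u : V → ℝ → ℝ)
    (hsmooth : ∀ x, ContDiffOn ℝ (⊤ : ℕ∞) (u x) (Set.Icc (-T) 0))
    (hheat : ∀ x, ∀ t ∈ Set.Icc (-T) 0,
      HasDerivWithinAt (u x) (G.lap (fun y => u y t) x) (Set.Icc (-T) 0) t)
    (hgrowth : ∀ x, ∀ t ∈ Set.Icc (-T) 0,
      |u x t| ≤ A₁ * Real.exp (A₂ * (G.dist x p : ℝ) * Real.log (G.dist x p : ℝ))) :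
    ∀ (k : ℕ) (x : V),
      |iteratedDerivWithin k (u x) (Set.Icc (-T) 0) 0| ≤
        A₁ * (2 * C) ^ k *
          Real.exp ((A₂ + A₃) * ((k : ℝ) + (G.dist x p : ℝ)) *
            Real.log ((k : ℝ) + (G.dist x p : ℝ))) := by
  have hTI : (-T) < 0 := by linarith
  have hUD : UniqueDiffOn ℝ (Set.Icc (-T) (0:ℝ)) := uniqueDiffOn_Icc hTI
  have h0I : (0:ℝ) ∈ Set.Icc (-T) (0:ℝ) := ⟨by linarith, le_refl 0⟩
  set w : ℕ → V → ℝ → ℝ := fun k x t => G.lapIter k (fun y => u y t) x with hw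
  have hw_succ : ∀ k x t, w (k+1) x t = G.lap (fun y => w k y t) x := fun k x t => rfl
  -- time derivatives
  have hderiv : ∀ k x, ∀ t ∈ Set.Icc (-T) (0:ℝ),
      HasDerivWithinAt (w k x) (w (k+1) x t) (Set.Icc (-T) 0) t := by
    intro k
    induction k with
    | zero => exact fun x t ht => hheat x t ht
    | succ k ih =>
      intro x t ht
      have hfun : (w (k+1) x) = fun s => ∑ y ∈ (G.locFin x).toFinset,
          (G.ω x y / G.μ x) * (w k y s - w k x s) := by
        funext s
        exact G.lap_eq_sum _ x
      rw [hfun, hw_succ, G.lap_eq_sum]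
      exact HasDerivWithinAt.fun_sum fun y _ => ((ih y t ht).sub (ih x t ht)).const_mul _
  -- identification of iterated derivatives
  have hiter : ∀ k x, ∀ t ∈ Set.Icc (-T) (0:ℝ),
      iteratedDerivWithin k (u x) (Set.Icc (-T) 0) t = w k x t := by
    intro k
    induction k with
    | zero => intro x t ht; simp [hw, WeightedGraph.lapIter]
    | succ k ih =>
      intro x t ht
      rw [iteratedDerivWithin_succ,
        derivWithin_congr (fun s hs => ih x s hs) (ih x t ht)]
      exact (hderiv k x t ht).derivWithin (hUD t ht)
  -- the key inductive bound
  have key : ∀ k y, |w k y 0| ≤ A₁ * (2*C)^k *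
      ((k : ℝ) + (G.dist y p : ℝ)) ^ ((k:ℝ) * A₃) *
      Real.exp (A₂ * ((k:ℝ) + (G.dist y p : ℝ)) * Real.log ((k:ℝ) + (G.dist y p : ℝ))) := by
    intro k
    induction k with
    | zero =>
      intro y
      have h := hgrowth y 0 h0I
      have h0 : ((0:ℕ):ℝ) * A₃ = 0 := by norm_num
      simpa [hw, WeightedGraph.lapIter, h0, Real.rpow_zero] using h
    | succ k ih =>
      intro y
      set d : ℕ := G.dist y p with hd
      set M : ℝ := A₁ * (2*C)^k * (((k+1:ℕ) : ℝ) + (d:ℝ)) ^ ((k:ℝ) * A₃) *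
        Real.exp (A₂ * (((k+1:ℕ):ℝ) + (d:ℝ)) * Real.log (((k+1:ℕ):ℝ) + (d:ℝ))) with hM
      have hMnn : 0 ≤ M := by
        have hb : (0:ℝ) ≤ ((k+1:ℕ):ℝ) + (d:ℝ) := by positivity
        have : (0:ℝ) ≤ (((k+1:ℕ):ℝ) + (d:ℝ)) ^ ((k:ℝ) * A₃) := Real.rpow_nonneg hb _
        positivity
      have hbound : ∀ z, (G.ω y z ≠ 0 ∨ z = y) → |w k z 0| ≤ M := by
        intro z hz
        have hdz : G.dist z p ≤ d + 1 := by
          rcases hz with h | rfl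
          · exact G.dist_le_of_ne_zero hconn p y z h
          · omega
        have hle : (k : ℝ) + (G.dist z p : ℝ) ≤ ((k+1:ℕ):ℝ) + (d:ℝ) := by
          push_cast
          have : (G.dist z p : ℝ) ≤ (d:ℝ) + 1 := by exact_mod_cast hdz
          linarith
        have hnn : (0:ℝ) ≤ (k : ℝ) + (G.dist z p : ℝ) := by positivity
        refine le_trans (ih z) ?_
        rw [hM]
        have h1 : ((k : ℝ) + (G.dist z p : ℝ)) ^ ((k:ℝ) * A₃) ≤
            (((k+1:ℕ):ℝ) + (d:ℝ)) ^ ((k:ℝ) * A₃) :=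
          Real.rpow_le_rpow hnn hle (by positivity)
        have h2 : Real.exp (A₂ * ((k:ℝ) + (G.dist z p : ℝ)) * Real.log ((k:ℝ) + (G.dist z p : ℝ)))
            ≤ Real.exp (A₂ * (((k+1:ℕ):ℝ) + (d:ℝ)) * Real.log (((k+1:ℕ):ℝ) + (d:ℝ))) := by
          apply Real.exp_le_exp.2
          have hm : ((k + G.dist z p : ℕ):ℝ) * Real.log ((k + G.dist z p : ℕ):ℝ) ≤
              (((k+1) + d : ℕ):ℝ) * Real.log (((k+1) + d : ℕ):ℝ) :=
            mullog_mono (by omega)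
          push_cast at hm ⊢
          nlinarith [hA₂.le]
        calc A₁ * (2*C)^k * ((k : ℝ) + (G.dist z p : ℝ)) ^ ((k:ℝ) * A₃) *
              Real.exp (A₂ * ((k:ℝ) + (G.dist z p : ℝ)) * Real.log ((k:ℝ) + (G.dist z p : ℝ)))
            ≤ A₁ * (2*C)^k * (((k+1:ℕ):ℝ) + (d:ℝ)) ^ ((k:ℝ) * A₃) *
              Real.exp (A₂ * ((k:ℝ) + (G.dist z p : ℝ)) * Real.log ((k:ℝ) + (G.dist z p : ℝ))) := by
              have he : (0:ℝ) ≤ Real.exp (A₂ * ((k:ℝ) + (G.dist z p : ℝ)) *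
                  Real.log ((k:ℝ) + (G.dist z p : ℝ))) := (Real.exp_pos _).le
              exact mul_le_mul_of_nonneg_right
                (mul_le_mul_of_nonneg_left h1 (by positivity)) he
          _ ≤ A₁ * (2*C)^k * (((k+1:ℕ):ℝ) + (d:ℝ)) ^ ((k:ℝ) * A₃) *
              Real.exp (A₂ * (((k+1:ℕ):ℝ) + (d:ℝ)) * Real.log (((k+1:ℕ):ℝ) + (d:ℝ))) := by
              have hx : (0:ℝ) ≤ A₁ * (2*C)^k * (((k+1:ℕ):ℝ) + (d:ℝ)) ^ ((k:ℝ) * A₃) := by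
                have := Real.rpow_nonneg (show (0:ℝ) ≤ ((k+1:ℕ):ℝ) + (d:ℝ) by positivity)
                  ((k:ℝ)*A₃)
                positivity
              exact mul_le_mul_of_nonneg_left h2 hx
      have h1 : |w (k+1) y 0| ≤ 2 * G.deg y * M := by
        rw [hw_succ]
        exact G.abs_lap_le _ y M hbound
      have hdegy : G.deg y ≤ C * (d:ℝ) ^ A₃ := hdeg y
      have h3 : (d:ℝ) ^ A₃ ≤ (((k+1:ℕ):ℝ) + (d:ℝ)) ^ A₃ :=
        Real.rpow_le_rpow (by positivity) (by push_cast; linarith) hA₃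
      have h4 : 2 * G.deg y * M ≤ 2 * C * ((((k+1:ℕ):ℝ) + (d:ℝ)) ^ A₃) * M := by
        have hdn := G.deg_nonneg y
        have : G.deg y ≤ C * (((k+1:ℕ):ℝ) + (d:ℝ)) ^ A₃ := by
          refine le_trans hdegy ?_
          exact mul_le_mul_of_nonneg_left h3 hC.le
        nlinarith
      have hfin : 2 * C * ((((k+1:ℕ):ℝ) + (d:ℝ)) ^ A₃) * M =
          A₁ * (2*C)^(k+1) * (((k+1:ℕ):ℝ) + (d:ℝ)) ^ (((k+1:ℕ):ℝ) * A₃) *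
          Real.exp (A₂ * (((k+1:ℕ):ℝ) + (d:ℝ)) * Real.log (((k+1:ℕ):ℝ) + (d:ℝ))) := by
        rw [hM]
        have hpos : (0:ℝ) < ((k+1:ℕ):ℝ) + (d:ℝ) := by positivity
        have : (((k+1:ℕ):ℝ) + (d:ℝ)) ^ (((k+1:ℕ):ℝ) * A₃) =
            (((k+1:ℕ):ℝ) + (d:ℝ)) ^ A₃ * (((k+1:ℕ):ℝ) + (d:ℝ)) ^ ((k:ℝ) * A₃) := by
          rw [← Real.rpow_add hpos]
          congr 1
          push_cast
          ring
        rw [this]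
        ring
      calc |w (k+1) y 0| ≤ 2 * G.deg y * M := h1
        _ ≤ 2 * C * ((((k+1:ℕ):ℝ) + (d:ℝ)) ^ A₃) * M := h4
        _ = _ := hfin
  -- final combination
  intro k x
  rw [hiter k x 0 h0I]
  refine le_trans (key k x) ?_
  set n : ℕ := k + G.dist x p with hn
  have hcast : (k:ℝ) + (G.dist x p : ℝ) = (n:ℝ) := by rw [hn]; push_cast; ring
  rw [hcast]
  have hmain : ((n:ℝ)) ^ ((k:ℝ) * A₃) * Real.exp (A₂ * (n:ℝ) * Real.log (n:ℝ)) ≤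
      Real.exp ((A₂ + A₃) * (n:ℝ) * Real.log (n:ℝ)) := by
    rcases Nat.eq_zero_or_pos k with rfl | hk
    · have : ((0:ℕ):ℝ) * A₃ = 0 := by norm_num
      rw [this, Real.rpow_zero, one_mul]
      apply Real.exp_le_exp.2
      nlinarith [mullog_nonneg n]
    · have hn1 : 1 ≤ n := by omega
      have hnpos : (0:ℝ) < (n:ℝ) := by exact_mod_cast Nat.lt_of_lt_of_le Nat.zero_lt_one hn1
      rw [Real.rpow_def_of_pos hnpos, ← Real.exp_add]
      apply Real.exp_le_exp.2
      have hlogn : 0 ≤ Real.log (n:ℝ) := Real.log_nonneg (by exact_mod_cast hn1)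
      have hkn : (k:ℝ) ≤ (n:ℝ) := by exact_mod_cast (by omega : k ≤ n)
      have h5 : (k:ℝ) * A₃ * Real.log (n:ℝ) ≤ (n:ℝ) * A₃ * Real.log (n:ℝ) :=
        mul_le_mul_of_nonneg_right (mul_le_mul_of_nonneg_right hkn hA₃) hlogn
      nlinarith [h5]
  calc A₁ * (2*C)^k * ((n:ℝ)) ^ ((k:ℝ) * A₃) * Real.exp (A₂ * (n:ℝ) * Real.log (n:ℝ))
      = A₁ * (2*C)^k * (((n:ℝ)) ^ ((k:ℝ) * A₃) * Real.exp (A₂ * (n:ℝ) * Real.log (n:ℝ))) := by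
        ring
    _ ≤ A₁ * (2*C)^k * Real.exp ((A₂ + A₃) * (n:ℝ) * Real.log (n:ℝ)) := by
        refine mul_le_mul_of_nonneg_left hmain ?_
        positivity
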